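/- arXiv:1011.2737 — 3 statements merged into one kernel-verified Lean document; each statement's English description precedes it below -/
import Mathlib

section
/- Let A be an n×n Hermitian matrix (n ≥ 2) with entries in the ring of integers of an imaginary quadratic field, such that every eigenvalue of A lies in [-2,2]. Suppose A is indecomposable (its underlying graph, with an edge between i and j whenever A_{ij} ≠ 0, is connected) and n ≥ 2. Then every diagonal entry of A lies in {-1, 0, 1}. -/
open Matrix ComplexOrder

lemma aux_shift_psd {m : Type*} [Fintype m] [DecidableEq m]
    {A : Matrix m m ℂ} (hA : A.IsHermitian) {c : ℝ}
    (h : ∀ i, hA.eigenvalues i ≤ c) :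
    ((c : ℂ) • (1 : Matrix m m ℂ) - A).PosSemidef := by
  have hu : (hA.eigenvectorUnitary : Matrix m m ℂ) * star (hA.eigenvectorUnitary : Matrix m m ℂ)
      = 1 := Matrix.mem_unitaryGroup_iff.mp hA.eigenvectorUnitary.2
  have key : (c : ℂ) • (1 : Matrix m m ℂ) - A
      = (hA.eigenvectorUnitary : Matrix m m ℂ)
        * Matrix.diagonal (fun i => ((c - hA.eigenvalues i : ℝ) : ℂ))
        * (hA.eigenvectorUnitary : Matrix m m ℂ)ᴴ := by
    have hdiag : Matrix.diagonal (fun i => ((c - hA.eigenvalues i : ℝ) : ℂ))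
        = (c : ℂ) • (1 : Matrix m m ℂ)
          - Matrix.diagonal (RCLike.ofReal ∘ hA.eigenvalues) := by
      rw [show (fun i => ((c - hA.eigenvalues i : ℝ) : ℂ))
          = fun i => (c : ℂ) - ((hA.eigenvalues i : ℝ) : ℂ) from
          funext fun i => by push_cast; ring]
      rw [← Matrix.diagonal_sub, Matrix.smul_one_eq_diagonal]
      rfl
    rw [hdiag, Matrix.mul_sub, Matrix.sub_mul, Matrix.mul_smul, Matrix.mul_one,
      Matrix.smul_mul, ← Matrix.star_eq_conjTranspose, hu]
    conv_lhs => rw [hA.spectral_theorem]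
    rfl
  rw [key]
  refine (Matrix.posSemidef_diagonal_iff.mpr fun i => ?_).mul_mul_conjTranspose_same _
  exact Complex.zero_le_real.mpr (by linarith [h i])

lemma aux_shift_psd' {m : Type*} [Fintype m] [DecidableEq m]
    {A : Matrix m m ℂ} (hA : A.IsHermitian) {c : ℝ}
    (h : ∀ i, -c ≤ hA.eigenvalues i) :
    ((c : ℂ) • (1 : Matrix m m ℂ) + A).PosSemidef := by
  have hu : (hA.eigenvectorUnitary : Matrix m m ℂ) * star (hA.eigenvectorUnitary : Matrix m m ℂ)
      = 1 := Matrix.mem_unitaryGroup_iff.mp hA.eigenvectorUnitary.2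
  have key : (c : ℂ) • (1 : Matrix m m ℂ) + A
      = (hA.eigenvectorUnitary : Matrix m m ℂ)
        * Matrix.diagonal (fun i => ((c + hA.eigenvalues i : ℝ) : ℂ))
        * (hA.eigenvectorUnitary : Matrix m m ℂ)ᴴ := by
    have hdiag : Matrix.diagonal (fun i => ((c + hA.eigenvalues i : ℝ) : ℂ))
        = (c : ℂ) • (1 : Matrix m m ℂ)
          + Matrix.diagonal (RCLike.ofReal ∘ hA.eigenvalues) := by
      rw [show (fun i => ((c + hA.eigenvalues i : ℝ) : ℂ))
          = fun i => (c : ℂ) + ((hA.eigenvalues i : ℝ) : ℂ) from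
          funext fun i => by push_cast; ring]
      rw [← Matrix.diagonal_add, Matrix.smul_one_eq_diagonal]
      rfl
    rw [hdiag, Matrix.mul_add, Matrix.add_mul, Matrix.mul_smul, Matrix.mul_one,
      Matrix.smul_mul, ← Matrix.star_eq_conjTranspose, hu]
    conv_lhs => rw [hA.spectral_theorem]
    rfl
  rw [key]
  refine (Matrix.posSemidef_diagonal_iff.mpr fun i => ?_).mul_mul_conjTranspose_same _
  exact Complex.zero_le_real.mpr (by linarith [h i])

lemma aux_psd_row_zero {m : Type*} [Fintype m] [DecidableEq m]
    {B : Matrix m m ℂ} (hB : B.PosSemidef) {i : m} (h : B i i = 0) (j : m) :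
    B i j = 0 := by
  have h0 : star (Pi.single i (1:ℂ)) ⬝ᵥ B *ᵥ Pi.single i (1:ℂ) = 0 := by
    simp [Matrix.mulVec_single, dotProduct, Pi.single_apply,
      Finset.sum_ite_eq', h]
  have hcol := (hB.dotProduct_mulVec_zero_iff _).mp h0
  have hji : B j i = 0 := by
    have := congrFun hcol j
    simpa [Matrix.mulVec_single] using this
  have hh := hB.isHermitian.apply i j
  rw [hji, star_zero] at hh
  exact hh.symm

/-- Let `A` be an `n × n` Hermitian matrix (`n ≥ 2`) with entries in the ring of integers of an
imaginary quadratic field `ℚ(√d)` (`d < 0` squarefree; entries are algebraic integers of the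
form `a + b√d` with `a, b ∈ ℚ`, viewed in `ℂ`), all of whose eigenvalues lie in `[-2, 2]`.
If `A` is indecomposable, i.e. the graph on `{1, …, n}` with an edge between `i` and `j`
whenever `A i j ≠ 0` is connected, then every diagonal entry of `A` lies in `{-1, 0, 1}`. -/
theorem stmt_7 (d : ℤ) (hd : d < 0) (hsq : Squarefree d)
    (n : ℕ) (hn : 2 ≤ n)
    (A : Matrix (Fin n) (Fin n) ℂ) (hA : A.IsHermitian)
    (hint : ∀ i j, IsIntegral ℤ (A i j))
    (hmem : ∀ i j, ∃ a b : ℚ, A i j = (a : ℂ) + (b : ℂ) * (Complex.I * Real.sqrt (-(d : ℝ))))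
    (heig : ∀ i, hA.eigenvalues i ∈ Set.Icc (-2 : ℝ) 2)
    (hconn : (SimpleGraph.fromRel (fun i j : Fin n => A i j ≠ 0)).Connected) :
    ∀ i, A i i ∈ ({-1, 0, 1} : Set ℂ) := by
  intro i
  -- A i i is real
  have hreal : (A i i).im = 0 := by
    have h1 := hA.apply i i
    have : (starRingEnd ℂ) (A i i) = A i i := h1
    exact Complex.conj_eq_iff_im.mp this
  -- A i i is rational
  obtain ⟨a, b, hab⟩ := hmem i i
  have hdr : (d : ℝ) < 0 := by exact_mod_cast hd
  have hsqrt : (0:ℝ) < Real.sqrt (-(d:ℝ)) := by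
    apply Real.sqrt_pos.mpr; linarith
  have hb : b = 0 := by
    have him : (A i i).im = (b:ℝ) * Real.sqrt (-(d:ℝ)) := by
      rw [hab]; simp [Complex.add_im, Complex.mul_im, Complex.mul_re]
    rw [hreal] at him
    rcases mul_eq_zero.mp him.symm with h | h
    · exact_mod_cast h
    · exact absurd h (ne_of_gt hsqrt)
  have haq : A i i = ((a : ℚ) : ℂ) := by rw [hab, hb]; push_cast; ring
  -- A i i is an integer z
  have hisint : IsIntegral ℤ (a : ℚ) := by
    have h1 := hint i i
    rw [haq] at h1
    have h2 : IsIntegral ℤ (algebraMap ℚ ℂ a) := by simpa using h1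
    exact (isIntegral_algebraMap_iff (algebraMap ℚ ℂ).injective).mp h2
  obtain ⟨z, hz⟩ := IsIntegrallyClosed.isIntegral_iff.mp hisint
  have hz' : A i i = (z : ℂ) := by
    rw [haq, ← hz]; push_cast; rfl
  -- PSD of 2•1 ∓ A
  have hB : ((2:ℂ) • (1 : Matrix (Fin n) (Fin n) ℂ) - A).PosSemidef := by
    have := aux_shift_psd hA (c := 2) (fun k => (heig k).2)
    simpa using this
  have hC : ((2:ℂ) • (1 : Matrix (Fin n) (Fin n) ℂ) + A).PosSemidef := by
    have := aux_shift_psd' hA (c := 2) (fun k => (heig k).1)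
    simpa using this
  have hBii : ((2:ℂ) • (1 : Matrix (Fin n) (Fin n) ℂ) - A) i i = (2:ℂ) - (z:ℂ) := by
    simp [Matrix.sub_apply, Matrix.smul_apply, Matrix.one_apply, hz']
  have hCii : ((2:ℂ) • (1 : Matrix (Fin n) (Fin n) ℂ) + A) i i = (2:ℂ) + (z:ℂ) := by
    simp [Matrix.add_apply, Matrix.smul_apply, Matrix.one_apply, hz']
  -- bound on z
  have hdiagval : ∀ (M : Matrix (Fin n) (Fin n) ℂ),
      star (Pi.single i (1:ℂ)) ⬝ᵥ M *ᵥ Pi.single i (1:ℂ) = M i i := by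
    intro M
    simp [Matrix.mulVec_single, dotProduct, Pi.single_apply, Finset.sum_ite_eq']
  have hble : z ≤ 2 := by
    have h0 := hB.dotProduct_mulVec_nonneg (Pi.single i 1)
    rw [hdiagval, hBii] at h0
    have h1 : (0:ℝ) ≤ ((2 - z : ℤ) : ℝ) := by
      apply Complex.zero_le_real.mp
      convert h0 using 1
      push_cast; ring
    have : (0:ℤ) ≤ 2 - z := by exact_mod_cast h1
    omega
  have hbge : -2 ≤ z := by
    have h0 := hC.dotProduct_mulVec_nonneg (Pi.single i 1)
    rw [hdiagval, hCii] at h0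
    have h1 : (0:ℝ) ≤ ((2 + z : ℤ) : ℝ) := by
      apply Complex.zero_le_real.mp
      convert h0 using 1
      push_cast; ring
    have : (0:ℤ) ≤ 2 + z := by exact_mod_cast h1
    omega
  -- i has a neighbor
  obtain ⟨k, hik⟩ : ∃ k, (SimpleGraph.fromRel (fun i j : Fin n => A i j ≠ 0)).Adj i k := by
    obtain ⟨j, hj⟩ := Fintype.exists_ne_of_one_lt_card (by simp; omega) i
    obtain ⟨w⟩ := hconn.preconnected i j
    cases w with
    | nil => exact absurd rfl hj.symm
    | cons h p => exact ⟨_, h⟩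
  rw [SimpleGraph.fromRel_adj] at hik
  obtain ⟨hik1, hik2⟩ := hik
  -- exclude z = 2
  have hne2 : z ≠ 2 := by
    intro h2
    have hBzero : ((2:ℂ) • (1 : Matrix (Fin n) (Fin n) ℂ) - A) i i = 0 := by
      rw [hBii, h2]; push_cast; ring
    have hAik : A i k = 0 := by
      have := aux_psd_row_zero hB hBzero k
      simp only [Matrix.sub_apply, Matrix.smul_apply, Matrix.one_apply,
        if_neg hik1, smul_zero, zero_sub, neg_eq_zero] at this
      exact this
    have hAki : A k i = 0 := by
      have := hA.apply k i
      rw [hAik, star_zero] at this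
      exact this.symm
    rcases hik2 with h | h
    · exact h hAik
    · exact h hAki
  -- exclude z = -2
  have hnem2 : z ≠ -2 := by
    intro h2
    have hCzero : ((2:ℂ) • (1 : Matrix (Fin n) (Fin n) ℂ) + A) i i = 0 := by
      rw [hCii, h2]; push_cast; ring
    have hAik : A i k = 0 := by
      have := aux_psd_row_zero hC hCzero k
      simp only [Matrix.add_apply, Matrix.smul_apply, Matrix.one_apply,
        if_neg hik1, smul_zero, zero_add] at this
      exact this
    have hAki : A k i = 0 := by
      have := hA.apply k i
      rw [hAik, star_zero] at this
      exact this.symm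
    rcases hik2 with h | h
    · exact h hAik
    · exact h hAki
  -- conclude
  rw [hz']
  interval_cases z
  · exact absurd rfl hnem2
  · norm_num [Set.mem_insert_iff, Set.mem_singleton_iff]
  · norm_num [Set.mem_insert_iff, Set.mem_singleton_iff]
  · norm_num [Set.mem_insert_iff, Set.mem_singleton_iff]
  · exact absurd rfl hne2
end

section
/- Let ω = √-2. The 4×4 Hermitian matrix M with zero diagonal, M_{12} = ω, M_{34} = -ω, M_{13} = M_{24} = M_{14} = 1, M_{23} = -1 (completed by conjugate symmetry) satisfies M² = 4I, so all its eigenvalues are ±2. -/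
/-- `ω = √-2`. -/
noncomputable def omegaS4star : ℂ := Complex.I * Real.sqrt 2

/-- The matrix of the maximal cyclotomic L-graph `S₄*` over `ℤ[√-2]`: zero diagonal,
`M₁₂ = ω`, `M₃₄ = -ω`, `M₁₃ = M₂₄ = M₁₄ = 1`, `M₂₃ = -1`, completed by conjugate symmetry. -/
noncomputable def S4starMatrix : Matrix (Fin 4) (Fin 4) ℂ :=
  !![0, omegaS4star, 1, 1;
     starRingEnd ℂ omegaS4star, 0, -1, 1;
     1, -1, 0, -omegaS4star;
     1, 1, -(starRingEnd ℂ omegaS4star), 0]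

lemma omega_sq : omegaS4star * omegaS4star = -2 := by
  unfold omegaS4star
  have h : (Real.sqrt 2 : ℂ) * (Real.sqrt 2 : ℂ) = 2 := by
    rw [← Complex.ofReal_mul, Real.mul_self_sqrt (by norm_num)]; norm_num
  calc Complex.I * Real.sqrt 2 * (Complex.I * Real.sqrt 2)
      = Complex.I * Complex.I * ((Real.sqrt 2 : ℂ) * Real.sqrt 2) := by ring
    _ = -2 := by rw [Complex.I_mul_I, h]; ring

lemma omega_sq' : omegaS4star ^ 2 = -2 := by rw [sq]; exact omega_sq

lemma conj_omega : starRingEnd ℂ omegaS4star = -omegaS4star := by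
  unfold omegaS4star
  simp [map_mul, Complex.conj_I, Complex.conj_ofReal]

/-- The matrix of `S₄*` satisfies `M² = 4I`, so all its eigenvalues are `±2`. -/
theorem stmt_10 :
    S4starMatrix * S4starMatrix = (4 : ℂ) • (1 : Matrix (Fin 4) (Fin 4) ℂ) ∧
      ∀ μ ∈ spectrum ℂ S4starMatrix, μ = 2 ∨ μ = -2 := by
  have hsq : S4starMatrix * S4starMatrix = (4 : ℂ) • (1 : Matrix (Fin 4) (Fin 4) ℂ) := by
    unfold S4starMatrix
    rw [conj_omega]
    ext i j
    fin_cases i <;> fin_cases j <;>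
      simp [Matrix.mul_apply, Fin.sum_univ_four, Matrix.one_apply,
        Matrix.vecHead, Matrix.vecTail] <;>
      ring_nf <;>
      norm_num [omega_sq']
  refine ⟨hsq, ?_⟩
  intro μ hμ
  have h1 : (Polynomial.eval μ (Polynomial.X ^ 2 - Polynomial.C (4:ℂ))) ∈
      spectrum ℂ (Polynomial.aeval S4starMatrix (Polynomial.X ^ 2 - Polynomial.C (4:ℂ))) :=
    spectrum.subset_polynomial_aeval S4starMatrix _
      (Set.mem_image_of_mem (Polynomial.eval · (Polynomial.X ^ 2 - Polynomial.C (4:ℂ))) hμ)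
  have h0 : Polynomial.aeval S4starMatrix (Polynomial.X ^ 2 - Polynomial.C (4:ℂ))
      = (0 : Matrix (Fin 4) (Fin 4) ℂ) := by
    simp [map_sub, map_pow, Polynomial.aeval_X, Polynomial.aeval_C, sq, hsq,
      Algebra.algebraMap_eq_smul_one]
  rw [h0, spectrum.zero_eq] at h1
  simp only [Polynomial.eval_sub, Polynomial.eval_pow, Polynomial.eval_X,
    Polynomial.eval_C, Set.mem_singleton_iff] at h1
  have : (μ - 2) * (μ + 2) = 0 := by linear_combination h1
  rcases mul_eq_zero.1 this with h | h
  · left; linear_combination h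
  · right; linear_combination h
end

section
/- There is no 3×3 Hermitian matrix M with zero diagonal, |M_{12}|² = |M_{23}|² = 2, |M_{13}|² = 1, and all eigenvalues in [-2,2]. Equivalently, any Hermitian matrix of this shape has an eigenvalue of absolute value strictly greater than 2. -/
open Matrix

lemma trace_sq_eq_sum_sq' {n : Type*} [Fintype n] [DecidableEq n]
    {M : Matrix n n ℂ} (hM : M.IsHermitian) :
    (M * M).trace = ∑ i, ((hM.eigenvalues i : ℂ))^2 := by
  set U : Matrix n n ℂ := (hM.eigenvectorUnitary : Matrix n n ℂ) with hUdef
  set D : Matrix n n ℂ := diagonal (RCLike.ofReal ∘ hM.eigenvalues) with hDdef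
  have hU : star U * U = 1 := (Matrix.mem_unitaryGroup_iff').mp hM.eigenvectorUnitary.2
  have hspec : M = U * D * star U := hM.spectral_theorem
  have key : M * M = U * (D * D) * star U := by
    conv_lhs => rw [hspec]
    rw [show U * D * star U * (U * D * star U) = U * D * (star U * U) * D * star U by
      simp only [mul_assoc], hU]
    simp only [mul_one, mul_assoc]
  rw [key, Matrix.trace_mul_cycle, ← mul_assoc, hU, one_mul, hDdef,
    diagonal_mul_diagonal, Matrix.trace_diagonal]
  simp [sq]

lemma trace_eq_sum_eig' {n : Type*} [Fintype n] [DecidableEq n]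
    {M : Matrix n n ℂ} (hM : M.IsHermitian) :
    M.trace = ∑ i, ((hM.eigenvalues i : ℂ)) := by
  have hU : star (hM.eigenvectorUnitary : Matrix n n ℂ) * hM.eigenvectorUnitary = 1 :=
    (Matrix.mem_unitaryGroup_iff').mp hM.eigenvectorUnitary.2
  conv_lhs => rw [hM.spectral_theorem]
  rw [Unitary.conjStarAlgAut_apply, Matrix.trace_mul_cycle, hU, one_mul, Matrix.trace_diagonal]
  simp

/-- There is no 3×3 Hermitian matrix `M` with zero diagonal, `|M₁₂|² = |M₂₃|² = 2`,
`|M₁₃|² = 1`, and all eigenvalues in `[-2, 2]`: any such Hermitian matrix has an eigenvalue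
of absolute value strictly greater than 2. -/
theorem stmt_11 (M : Matrix (Fin 3) (Fin 3) ℂ) (hM : M.IsHermitian)
    (hdiag : ∀ i, M i i = 0)
    (h12 : Complex.normSq (M 0 1) = 2) (h23 : Complex.normSq (M 1 2) = 2)
    (h13 : Complex.normSq (M 0 2) = 1) :
    ∃ i, 2 < |hM.eigenvalues i| := by
  have hcon : ∀ i j, M j i = (starRingEnd ℂ) (M i j) := by
    intro i j
    have h := congrFun (congrFun hM i) j
    simp only [conjTranspose_apply] at h
    rw [← h]
    simp
  have htr : M.trace = 0 := by
    simp [Matrix.trace, Matrix.diag, Fin.sum_univ_three, hdiag]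
  have htr2 : (M * M).trace = 10 := by
    simp only [Matrix.trace, Matrix.diag, Matrix.mul_apply, Fin.sum_univ_three]
    rw [hcon 0 1, hcon 0 2, hcon 1 2]
    simp only [hdiag, mul_zero, zero_mul, zero_add, add_zero]
    rw [mul_comm ((starRingEnd ℂ) (M 0 1)), mul_comm ((starRingEnd ℂ) (M 0 2)),
      mul_comm ((starRingEnd ℂ) (M 1 2)),
      Complex.mul_conj, Complex.mul_conj, Complex.mul_conj, h12, h23, h13]
    norm_num
  set a := hM.eigenvalues 0
  set b := hM.eigenvalues 1
  set c := hM.eigenvalues 2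
  have e1 : a + b + c = 0 := by
    have := trace_eq_sum_eig' hM
    rw [htr, Fin.sum_univ_three] at this
    have : ((a + b + c : ℝ) : ℂ) = 0 := by push_cast; linear_combination -this
    exact_mod_cast this
  have e2 : a^2 + b^2 + c^2 = 10 := by
    have := trace_sq_eq_sum_sq' hM
    rw [htr2, Fin.sum_univ_three] at this
    have : ((a^2 + b^2 + c^2 : ℝ) : ℂ) = 10 := by push_cast; linear_combination -this
    exact_mod_cast this
  by_contra h
  push_neg at h
  have ha := abs_le.mp (h 0)
  have hb := abs_le.mp (h 1)
  have hc := abs_le.mp (h 2)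
  nlinarith [sq_nonneg (a+b), sq_nonneg (b+c), sq_nonneg (a+c),
    mul_nonneg (by linarith [ha.1] : (0:ℝ) ≤ 2 + a) (by linarith [ha.2] : (0:ℝ) ≤ 2 - a),
    mul_nonneg (by linarith [hb.1] : (0:ℝ) ≤ 2 + b) (by linarith [hb.2] : (0:ℝ) ≤ 2 - b),
    mul_nonneg (by linarith [hc.1] : (0:ℝ) ≤ 2 + c) (by linarith [hc.2] : (0:ℝ) ≤ 2 - c)]
end
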